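/- Let a be a positive integer, q a nonzero complex number, and write [α]_t = (1 − t^α)/(1 − t). Define sequences a_p = [a]_{q^{(−1)^{p−1}}}, b_p = q^{(−1)^{p−1}·a}, c_p = −1 for p ∈ ℤ (which are 2-periodic), and set x = ([a]_q·[a]_{q^{−1}} + q^a + q^{−a})/2. Then for every integer p and every integer m ≥ 1, K_{2m}(p) = U_{m−1}(x)·([a]_q·[a]_{q^{−1}} + q^{(−1)^{p−1}·a}) − U_{m−2}(x) and K_{2m−1}(p+1) = U_{m−1}(x)·[a]_{q^{(−1)^p}}. -/

import Mathlib

/-! Expanding the tridiagonal determinant along its first row gives the three-term recurrence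
`K_{n+2}(p) = a_p K_{n+1}(p+1) - b_p c_p K_n(p+2)`, valid from `n = -1` on. For 2-periodic data
with `(b_p c_p)(b_{p+1} c_{p+1}) = 1`, two steps of this recurrence reproduce the Chebyshev
recurrence `U_{m+1} = 2x U_m - U_{m-1}` with `2x = a_p a_{p+1} - b_p c_p - b_{p+1} c_{p+1}`.
For the q-deformed data `b_p c_p = -q^{±a}` and `a_p a_{p+1} = [a]_q [a]_{q⁻¹}`, so both
conditions hold with the given `x`. -/

/-- The continuant `K_n(p)` of the sequences `a b c : ℤ → ℂ`: the determinant of the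
`n × n` tridiagonal matrix with diagonal `a_p, …, a_{p+n-1}`, superdiagonal
`b_p, …, b_{p+n-2}` and subdiagonal `c_p, …, c_{p+n-2}`; it equals `1` for `n = 0`
and `0` for `n < 0`. -/
noncomputable def contK (a b c : ℤ → ℂ) (p n : ℤ) : ℂ :=
  if n < 0 then 0 else
    Matrix.det (Matrix.of fun i j : Fin n.toNat =>
      if (i : ℕ) = (j : ℕ) then a (p + (i : ℕ))
      else if (i : ℕ) + 1 = (j : ℕ) then b (p + (i : ℕ))
      else if (i : ℕ) = (j : ℕ) + 1 then c (p + (j : ℕ))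
      else 0)

/-- The 2×2 matrix `L(α, β)` with first row `(α, β)` and second row `(1, 0)`. -/
def Lmat (α β : ℂ) : Matrix (Fin 2) (Fin 2) ℂ := !![α, β; 1, 0]

/-- `A_n(p) = L(a_p, −b_p c_p) ⋯ L(a_{p+n−1}, −b_{p+n−1} c_{p+n−1})`. -/
noncomputable def Amat (a b c : ℤ → ℂ) (p : ℤ) (n : ℕ) : Matrix (Fin 2) (Fin 2) ℂ :=
  ((List.range n).map (fun i => Lmat (a (p + (i : ℕ))) (-(b (p + (i : ℕ)) * c (p + (i : ℕ)))))).prod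

/-- The `t`-integer `[α]_t = (1 − t^α)/(1 − t)`. -/
noncomputable def qInt (t : ℂ) (α : ℕ) : ℂ := (1 - t ^ α) / (1 - t)

open Function Polynomial Polynomial.Chebyshev

section Tridiagonal

variable {R : Type*} [CommRing R] (a b c : ℤ → R)

def tridiag (p : ℤ) (n : ℕ) : Matrix (Fin n) (Fin n) R :=
  Matrix.of fun i j : Fin n =>
    if (i : ℕ) = (j : ℕ) then a (p + (i : ℕ))
    else if (i : ℕ) + 1 = (j : ℕ) then b (p + (i : ℕ))
    else if (i : ℕ) = (j : ℕ) + 1 then c (p + (j : ℕ))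
    else 0

theorem tridiag_submatrix_succ (p : ℤ) (n : ℕ) :
    (tridiag a b c p (n + 1)).submatrix Fin.succ Fin.succ = tridiag a b c (p + 1) n := by
  ext i j
  simp only [tridiag, Matrix.submatrix_apply, Matrix.of_apply, Fin.val_succ, add_left_inj]
  push_cast
  simp only [add_assoc, add_comm (1 : ℤ)]

theorem det_tridiag_add_two (p : ℤ) (n : ℕ) :
    (tridiag a b c p (n + 2)).det =
      a p * (tridiag a b c (p + 1) (n + 1)).det - b p * c p * (tridiag a b c (p + 2) n).det := by
  set M := tridiag a b c p (n + 2)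
  have hminor :
      (M.submatrix Fin.succ (Fin.succAbove 1)).det = c p * (tridiag a b c (p + 2) n).det := by
    have hcorner : (M.submatrix Fin.succ (Fin.succAbove 1)).submatrix Fin.succ Fin.succ =
        (M.submatrix Fin.succ Fin.succ).submatrix Fin.succ Fin.succ := by
      ext i j
      simp [Fin.one_succAbove_succ]
    rw [Matrix.det_succ_column_zero, Fin.sum_univ_succ, Finset.sum_eq_zero, Fin.succAbove_zero,
      hcorner, tridiag_submatrix_succ, tridiag_submatrix_succ, add_assoc p 1 1, one_add_one_eq_two]
    · simp [M, tridiag]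
    · intro i _
      simp [M, tridiag]
  rw [Matrix.det_succ_row_zero, Fin.sum_univ_succ, Fin.sum_univ_succ, Finset.sum_eq_zero]
  · simp [M, hminor, tridiag_submatrix_succ]
    simp [tridiag]
    ring
  · intro i _
    simp [M, tridiag]

end Tridiagonal

section Continuant

variable (a b c : ℤ → ℂ)

theorem contK_natCast (p : ℤ) (n : ℕ) : contK a b c p n = (tridiag a b c p n).det := by
  rw [contK, if_neg (by omega)]
  rfl

theorem contK_neg_one (p : ℤ) : contK a b c p (-1) = 0 :=
  if_pos (by norm_num)

theorem contK_zero (p : ℤ) : contK a b c p 0 = 1 := by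
  simpa using contK_natCast a b c p 0

theorem contK_one (p : ℤ) : contK a b c p 1 = a p := by
  simpa [Matrix.det_fin_one, tridiag] using contK_natCast a b c p 1

theorem contK_add_two (p : ℤ) {n : ℤ} (hn : -1 ≤ n) :
    contK a b c p (n + 2) =
      a p * contK a b c (p + 1) (n + 1) - b p * c p * contK a b c (p + 2) n := by
  rcases hn.eq_or_lt with rfl | hn
  · norm_num [contK_one, contK_zero, contK_neg_one]
  · lift n to ℕ using by omega
    simpa only [← contK_natCast, Nat.cast_add, Nat.cast_ofNat, Nat.cast_one]
      using det_tridiag_add_two a b c p n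

theorem contK_add_of_periodic {N : ℤ} (ha : Periodic a N) (hb : Periodic b N)
    (hc : Periodic c N) (p n : ℤ) : contK a b c (p + N) n = contK a b c p n := by
  simp only [contK, add_right_comm p N, ha _, hb _, hc _]

theorem contK_eq_chebyshevU_of_periodic_two (ha : Periodic a 2) (hb : Periodic b 2)
    (hc : Periodic c 2) (p : ℤ) (x : ℂ) (hbc : b p * c p * (b (p + 1) * c (p + 1)) = 1)
    (hx : 2 * x = a p * a (p + 1) - b p * c p - b (p + 1) * c (p + 1)) (m : ℕ) :
    contK a b c p (2 * m) =
        (U ℂ (m - 1)).eval x * (a p * a (p + 1) - b p * c p) - (U ℂ (m - 2)).eval x ∧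
      contK a b c (p + 1) (2 * m - 1) = (U ℂ (m - 1)).eval x * a (p + 1) := by
  have hper := contK_add_of_periodic a b c ha hb hc
  induction m with
  | zero => simp [contK_zero, contK_neg_one]
  | succ m ih =>
    obtain ⟨ih_even, ih_odd⟩ := ih
    have hU : (U ℂ m).eval x = 2 * x * (U ℂ (m - 1)).eval x - (U ℂ (m - 2)).eval x := by
      simp [U_eq ℂ (m : ℤ)]
    have hodd : contK a b c (p + 1) (2 * m + 1) = (U ℂ m).eval x * a (p + 1) := by
      rw [show (2 * m + 1 : ℤ) = 2 * m - 1 + 2 by ring, contK_add_two _ _ _ _ (by omega),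
        sub_add_cancel, show p + 1 + 1 = p + 2 by ring, hper, hper, ih_even, ih_odd, hU]
      linear_combination -(U ℂ (m - 1)).eval x * a (p + 1) * hx
    simp only [Nat.cast_succ, add_sub_cancel_right, show (m : ℤ) + 1 - 2 = m - 1 by ring,
      show 2 * (m : ℤ) + 2 - 1 = 2 * m + 1 by ring, show 2 * ((m : ℤ) + 1) = 2 * m + 2 by ring]
    refine ⟨?_, hodd⟩
    rw [contK_add_two _ _ _ _ (by omega), hodd, hper, ih_even]
    linear_combination (-(U ℂ (m - 1)).eval x) * hbc + b p * c p * hU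
      + b p * c p * (U ℂ (m - 1)).eval x * hx

end Continuant

theorem periodic_negOnePow_sub_one : Periodic (fun r : ℤ => ((r - 1).negOnePow : ℤ)) 2 := by
  intro r
  simp [add_sub_right_comm, Int.negOnePow_add, Int.negOnePow_even _ even_two]

theorem qInt_zpow_mul_qInt_zpow_neg (q : ℂ) (α : ℕ) (u : ℤˣ) :
    qInt (q ^ (u : ℤ)) α * qInt (q ^ (-(u : ℤ))) α = qInt q α * qInt q⁻¹ α := by
  rcases Int.units_eq_one_or u with rfl | rfl <;> simp [mul_comm]

theorem zpow_mul_add_zpow_neg_mul (q : ℂ) (α : ℕ) (u : ℤˣ) :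
    q ^ ((u : ℤ) * α) + q ^ (-(u : ℤ) * α) = q ^ (α : ℤ) + q ^ (-(α : ℤ)) := by
  rcases Int.units_eq_one_or u with rfl | rfl <;> simp [add_comm]

theorem contK_qDeformed_general (α : ℕ) (q : ℂ) (hq : q ≠ 0)
    (x : ℂ) (hx : x = (qInt q α * qInt q⁻¹ α + q ^ (α : ℤ) + q ^ (-(α : ℤ))) / 2)
    (p : ℤ) (m : ℕ) :
    contK (fun r => qInt (q ^ (((r - 1).negOnePow : ℤ))) α)
        (fun r => q ^ ((((r - 1).negOnePow : ℤ)) * α)) (fun _ => -1) p (2 * (m : ℤ)) =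
      (Polynomial.Chebyshev.U ℂ ((m : ℤ) - 1)).eval x
          * (qInt q α * qInt q⁻¹ α + q ^ ((((p - 1).negOnePow : ℤ)) * α))
        - (Polynomial.Chebyshev.U ℂ ((m : ℤ) - 2)).eval x ∧
    contK (fun r => qInt (q ^ (((r - 1).negOnePow : ℤ))) α)
        (fun r => q ^ ((((r - 1).negOnePow : ℤ)) * α)) (fun _ => -1) (p + 1) (2 * (m : ℤ) - 1) =
      (Polynomial.Chebyshev.U ℂ ((m : ℤ) - 1)).eval x * qInt (q ^ ((p.negOnePow : ℤ))) α := by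
  have hsign : (p.negOnePow : ℤ) = -((p - 1).negOnePow : ℤ) := by
    rw [← Units.val_neg, ← Int.negOnePow_succ, sub_add_cancel]
  have key := contK_eq_chebyshevU_of_periodic_two (c := fun _ => -1) _ _
    (periodic_negOnePow_sub_one.comp fun t => qInt (q ^ t) α)
    (periodic_negOnePow_sub_one.comp fun t => q ^ (t * α)) (fun _ => rfl) p x ?_ ?_ m
  · simp only [Function.comp_apply, add_sub_cancel_right, hsign, qInt_zpow_mul_qInt_zpow_neg,
      mul_neg_one, sub_neg_eq_add] at key
    rwa [hsign]
  · simp only [Function.comp_apply, add_sub_cancel_right, hsign, neg_mul_neg, mul_neg_one]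
    rw [← zpow_add₀ hq, neg_mul, add_neg_cancel, zpow_zero]
  · simp only [Function.comp_apply, add_sub_cancel_right, hsign, qInt_zpow_mul_qInt_zpow_neg, hx]
    linear_combination -zpow_mul_add_zpow_neg_mul q α (p - 1).negOnePow

/-- For a positive integer `α` and `q ≠ 0`, the continuants of the 2-periodic sequences
`a_p = [α]_{q^{(−1)^{p−1}}}`, `b_p = q^{(−1)^{p−1}·α}`, `c_p = −1` satisfy, with
`x = ([α]_q [α]_{q⁻¹} + q^α + q^{−α})/2`:
`K_{2m}(p) = U_{m−1}(x)·([α]_q [α]_{q⁻¹} + q^{(−1)^{p−1}·α}) − U_{m−2}(x)` and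
`K_{2m−1}(p+1) = U_{m−1}(x)·[α]_{q^{(−1)^p}}`. -/
theorem contK_qDeformed (α : ℕ) (hα : 1 ≤ α) (q : ℂ) (hq : q ≠ 0)
    (x : ℂ) (hx : x = (qInt q α * qInt q⁻¹ α + q ^ (α : ℤ) + q ^ (-(α : ℤ))) / 2)
    (p : ℤ) (m : ℕ) (hm : 1 ≤ m) :
    contK (fun r => qInt (q ^ (((r - 1).negOnePow : ℤ))) α)
        (fun r => q ^ ((((r - 1).negOnePow : ℤ)) * α)) (fun _ => -1) p (2 * (m : ℤ)) =
      (Polynomial.Chebyshev.U ℂ ((m : ℤ) - 1)).eval x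
          * (qInt q α * qInt q⁻¹ α + q ^ ((((p - 1).negOnePow : ℤ)) * α))
        - (Polynomial.Chebyshev.U ℂ ((m : ℤ) - 2)).eval x ∧
    contK (fun r => qInt (q ^ (((r - 1).negOnePow : ℤ))) α)
        (fun r => q ^ ((((r - 1).negOnePow : ℤ)) * α)) (fun _ => -1) (p + 1) (2 * (m : ℤ) - 1) =
      (Polynomial.Chebyshev.U ℂ ((m : ℤ) - 1)).eval x * qInt (q ^ ((p.negOnePow : ℤ))) α :=
  contK_qDeformed_general α q hq x hx p m
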